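/- Let 0 ≤ t_0 < s and let v be a trajectory of the consensus system defined on [t_0, s] such that G(u) satisfies Hypothesis 1 for all u ∈ [t_0, s]. Then (with D^+ denoting the upper right Dini derivative): D^+Δ_{U_1}(s) ≤ −Δ_{U_1}(s) + m·(Δ_N(t_0) − Δ_{U_1}(s)), and for every k ∈ {1,…,D−1}, D^+Δ_{U_{k+1}}(s) ≤ α_k·(Δ_{U_k}(s) − Δ_{U_{k+1}}(s)) + (m − α_k)·(Δ_N(t_0) − Δ_{U_{k+1}}(s)). -/

import Mathlib

open scoped Classical

/-- The pair `(SS_k, U_k)` of the hierarchical structure attached to the graph with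
adjacency `ta` and root `r`:
`SS_0 = {r}`, `U_k = ⋃_{l ≤ k} SS_l`, `SS_{k+1} = {i | ∃ j ∈ SS_k, ta i j = 1} \ U_k`. -/
noncomputable def hierSU {n : ℕ} (ta : Fin n → Fin n → ℝ) (r : Fin n) :
    ℕ → Finset (Fin n) × Finset (Fin n)
  | 0 => ({r}, {r})
  | k + 1 =>
      let p := hierSU ta r k
      let s := (Finset.univ.filter fun i => ∃ j ∈ p.1, ta i j = 1) \ p.2
      (s, p.2 ∪ s)

/-- `U_k`. -/
noncomputable def hierU {n : ℕ} (ta : Fin n → Fin n → ℝ) (r : Fin n) (k : ℕ) :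
    Finset (Fin n) :=
  (hierSU ta r k).2

/-- `α_k = min_{i ∈ U_{k+1}} ∑_{j ∈ U_k} ta i j`. -/
noncomputable def hierAlpha {n : ℕ} (ta : Fin n → Fin n → ℝ) (r : Fin n) (k : ℕ) : ℝ :=
  sInf ((fun i => ∑ j ∈ hierU ta r k, ta i j) '' ↑(hierU ta r (k + 1)))

/-- Hypothesis 1 (preservation of the hierarchical structure) for a graph with
adjacency `a`. -/
def HypOne {n : ℕ} (m D : ℕ) (ta : Fin n → Fin n → ℝ) (r : Fin n)
    (a : Fin n → Fin n → ℝ) : Prop :=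
  (∀ i ∈ hierU ta r 1, a i r = 1) ∧
  ∀ k : ℕ, 1 ≤ k → k ≤ D - 1 → ∀ i ∈ hierU ta r (k + 1),
    hierAlpha ta r k ≤ ∑ j ∈ hierU ta r k, a i j ∧
    ∑ j ∈ (hierU ta r k)ᶜ, a i j ≤ (m : ℝ) - hierAlpha ta r k

/-- Velocity diameter of the set `S` of agents. -/
noncomputable def sdiam {n d : ℕ} (S : Set (Fin n))
    (v : Fin n → EuclideanSpace ℝ (Fin d)) : ℝ :=
  sSup {x | ∃ i ∈ S, ∃ j ∈ S, x = ‖v i - v j‖}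

/-- Upper right Dini derivative. -/
noncomputable def diniUpper (f : ℝ → ℝ) (t : ℝ) : ℝ :=
  Filter.limsup (fun h : ℝ => (f (t + h) - f t) / h) (nhdsWithin 0 (Set.Ioi 0))

/-!
Each diameter `Δ_W` is a finite maximum of the norms `‖v_i - v_j‖`, so its upper Dini derivative
is bounded by the right derivatives of these norms at maximising pairs, i.e. by `⟪e, v̇_i - v̇_j⟫`
for a unit vector `e` with `⟪e, v_i - v_j⟫ = Δ_W`. Along `e` the agents `i` and `j` are extremal
in `W`, so their at least `α_k` neighbours in `U_k ⊆ W` pull them together by at least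
`Δ_W - Δ_{U_k}`, while the remaining at most `m - α_k` neighbours push them apart by at most
`Δ_N - Δ_W`. For `W = N` this shows that `Δ_N` is nonincreasing, which turns `Δ_N(s)` into
`Δ_N(t₀)`; the estimate for `U_1` is the case `U_0 = {r}`, `α_0 = 1`.
-/

open Filter Set Topology
open scoped RealInnerProductSpace

theorem diniUpper_eq_limsup_slope (f : ℝ → ℝ) (s : ℝ) :
    diniUpper f s = limsup (slope f s) (𝓝[>] s) := by
  have h : (fun h : ℝ => (f (s + h) - f s) / h) = slope f s ∘ (s + ·) := by
    funext h; simp [slope_def_field]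
  rw [diniUpper, h, limsup_comp, map_add_left_nhdsGT, add_zero]

section FinsetSup

variable {ι : Type*} {P : Finset ι} (hP : P.Nonempty) {g : ι → ℝ → ℝ} {g' : ι → ℝ} {s : ℝ}

theorem eventually_slope_finset_sup'_lt (hg : ∀ p ∈ P, HasDerivWithinAt (g p) (g' p) (Ioi s) s)
    {C C' : ℝ} (hC : ∀ p ∈ P, g p s = P.sup' hP (g · s) → g' p ≤ C) (hCC' : C < C') :
    ∀ᶠ z in 𝓝[>] s, slope (fun u => P.sup' hP (g · u)) s z < C' := by
  have hbound : ∀ p ∈ P, ∀ᶠ z in 𝓝[>] s, g p z < P.sup' hP (g · s) + C' * (z - s) := by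
    intro p hp
    by_cases hact : g p s = P.sup' hP (g · s)
    · have hslope := (hasDerivWithinAt_iff_tendsto_slope' self_notMem_Ioi).1 (hg p hp)
      filter_upwards [hslope.eventually_lt_const ((hC p hp hact).trans_lt hCC'),
        self_mem_nhdsWithin] with z hz hsz
      rw [slope_def_field, div_lt_iff₀ (sub_pos.2 hsz)] at hz
      linarith
    · have hlt : g p s < P.sup' hP (g · s) := (P.le_sup' (g · s) hp).lt_of_ne hact
      have hlim : Tendsto (fun z => g p z - C' * (z - s)) (𝓝[>] s) (𝓝 (g p s)) := by
        have hlin : Tendsto (fun z => C' * (z - s)) (𝓝[>] s) (𝓝 0) :=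
          tendsto_nhdsWithin_of_tendsto_nhds <|
            (by fun_prop : Continuous fun z => C' * (z - s)).tendsto' s 0 (by simp)
        simpa using (hg p hp).continuousWithinAt.tendsto.sub hlin
      filter_upwards [hlim.eventually_lt_const hlt] with z hz
      linarith
  filter_upwards [(eventually_all_finset P).2 hbound, self_mem_nhdsWithin] with z hz hsz
  rw [slope_def_field, div_lt_iff₀ (sub_pos.2 hsz), sub_lt_iff_lt_add', Finset.sup'_lt_iff]
  exact hz

theorem exists_eventually_le_slope_finset_sup'
    (hg : ∀ p ∈ P, HasDerivWithinAt (g p) (g' p) (Ioi s) s) :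
    ∃ L, ∀ᶠ z in 𝓝[>] s, L ≤ slope (fun u => P.sup' hP (g · u)) s z := by
  obtain ⟨p, hp, hpmax⟩ := Finset.exists_mem_eq_sup' hP (g · s)
  have hslope := (hasDerivWithinAt_iff_tendsto_slope' self_notMem_Ioi).1 (hg p hp)
  refine ⟨g' p - 1, ?_⟩
  filter_upwards [hslope.eventually_const_lt (sub_one_lt _), self_mem_nhdsWithin] with z hz hsz
  refine hz.le.trans ?_
  rw [slope_def_field, slope_def_field, hpmax]
  exact div_le_div_of_nonneg_right (sub_le_sub_right (P.le_sup' (g · z) hp) _)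
    (sub_pos.2 hsz).le

/-- Danskin's bound for a finite maximum. -/
theorem diniUpper_finset_sup'_le (hg : ∀ p ∈ P, HasDerivWithinAt (g p) (g' p) (Ioi s) s)
    {C : ℝ} (hC : ∀ p ∈ P, g p s = P.sup' hP (g · s) → g' p ≤ C) :
    diniUpper (fun u => P.sup' hP (g · u)) s ≤ C := by
  obtain ⟨L, hL⟩ := exists_eventually_le_slope_finset_sup' hP hg
  rw [diniUpper_eq_limsup_slope]
  refine le_of_forall_gt_imp_ge_of_dense fun C' hC' =>
    limsup_le_of_le (isCoboundedUnder_le_of_eventually_le _ hL) ?_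
  exact (eventually_slope_finset_sup'_lt hP hg hC hC').mono fun _ h => h.le

end FinsetSup

section Norm

variable {E : Type*} [NormedAddCommGroup E] [InnerProductSpace ℝ E]

theorem norm_normalize_le_one (x : E) : ‖NormedSpace.normalize x‖ ≤ 1 := by
  by_cases hx : x = 0
  · simp [hx]
  · exact (NormedSpace.norm_normalize_eq_one_iff.2 hx).le

theorem real_inner_normalize_self (x : E) : ⟪NormedSpace.normalize x, x⟫ = ‖x‖ := by
  by_cases hx : x = 0
  · simp [hx]
  · rw [NormedSpace.normalize, real_inner_smul_left, real_inner_self_eq_norm_sq]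
    field_simp [norm_ne_zero_iff.2 hx]

/-- The supporting vector `e` is the normalized `w s` if `w s ≠ 0`, and the normalized `w'`
otherwise. -/
theorem exists_hasDerivWithinAt_norm {w : ℝ → E} {w' : E} {s : ℝ} (hw : HasDerivAt w w' s) :
    ∃ e : E, ‖e‖ ≤ 1 ∧ ⟪e, w s⟫ = ‖w s‖ ∧
      HasDerivWithinAt (fun u => ‖w u‖) ⟪e, w'⟫ (Ioi s) s := by
  by_cases h0 : w s = 0
  · refine ⟨NormedSpace.normalize w', norm_normalize_le_one w', by simp [h0], ?_⟩
    rw [real_inner_normalize_self, hasDerivWithinAt_iff_tendsto_slope' self_notMem_Ioi]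
    refine ((hasDerivWithinAt_iff_tendsto_slope' self_notMem_Ioi).1
      hw.hasDerivWithinAt).norm.congr' ?_
    filter_upwards [self_mem_nhdsWithin] with z hz
    simp [slope_def_module, h0, norm_smul, abs_of_pos (sub_pos.2 (mem_Ioi.1 hz))]
  · refine ⟨NormedSpace.normalize (w s), norm_normalize_le_one _, real_inner_normalize_self _, ?_⟩
    have hsqrt := hw.norm_sq.sqrt (pow_ne_zero 2 (norm_ne_zero_iff.2 h0))
    simp only [Real.sqrt_sq (norm_nonneg _)] at hsqrt
    have hval : ⟪NormedSpace.normalize (w s), w'⟫ = 2 * ⟪w s, w'⟫ / (2 * ‖w s‖) := by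
      rw [NormedSpace.normalize, real_inner_smul_left]
      field_simp [norm_ne_zero_iff.2 h0]
    exact hval ▸ hsqrt.hasDerivWithinAt

end Norm

section Diameter

variable {n d : ℕ}

theorem sdiam_eq_finset_sup' {S : Finset (Fin n)} (hS : S.Nonempty)
    (w : Fin n → EuclideanSpace ℝ (Fin d)) :
    sdiam ↑S w = (S ×ˢ S).sup' (hS.product hS) (fun p => ‖w p.1 - w p.2‖) := by
  rw [Finset.sup'_eq_csSup_image, sdiam]
  congr 1
  ext x
  simp [eq_comm, and_assoc]

theorem norm_sub_le_sdiam {S : Finset (Fin n)} {i j : Fin n} (hi : i ∈ S) (hj : j ∈ S)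
    (w : Fin n → EuclideanSpace ℝ (Fin d)) : ‖w i - w j‖ ≤ sdiam ↑S w := by
  rw [sdiam_eq_finset_sup' ⟨i, hi⟩]
  exact Finset.le_sup' (f := fun p : Fin n × Fin n => ‖w p.1 - w p.2‖) (b := (i, j))
    (Finset.mem_product.2 ⟨hi, hj⟩)

theorem sdiam_mono {S T : Finset (Fin n)} (hS : S.Nonempty) (hST : S ⊆ T)
    (w : Fin n → EuclideanSpace ℝ (Fin d)) : sdiam ↑S w ≤ sdiam ↑T w := by
  rw [sdiam_eq_finset_sup' hS]
  exact Finset.sup'_le _ _ fun p hp =>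
    norm_sub_le_sdiam (hST (Finset.mem_product.1 hp).1) (hST (Finset.mem_product.1 hp).2) w

theorem sdiam_singleton (r : Fin n) (w : Fin n → EuclideanSpace ℝ (Fin d)) :
    sdiam ↑({r} : Finset (Fin n)) w = 0 := by
  rw [sdiam_eq_finset_sup' (Finset.singleton_nonempty r)]
  simp

theorem inner_sub_le_sdiam {S : Finset (Fin n)} {i j : Fin n} (hi : i ∈ S) (hj : j ∈ S)
    {e : EuclideanSpace ℝ (Fin d)} (he : ‖e‖ ≤ 1) (w : Fin n → EuclideanSpace ℝ (Fin d)) :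
    ⟪e, w i⟫ - ⟪e, w j⟫ ≤ sdiam ↑S w := by
  rw [← inner_sub_right]
  calc ⟪e, w i - w j⟫ ≤ ‖e‖ * ‖w i - w j‖ := real_inner_le_norm _ _
    _ ≤ ‖w i - w j‖ := mul_le_of_le_one_left (norm_nonneg _) he
    _ ≤ sdiam ↑S w := norm_sub_le_sdiam hi hj w

variable {v : ℝ → Fin n → EuclideanSpace ℝ (Fin d)} {v' : Fin n → EuclideanSpace ℝ (Fin d)}
  {s C : ℝ} {W : Finset (Fin n)}

theorem eventually_slope_sdiam_lt (hv : ∀ i, HasDerivAt (fun u => v u i) (v' i) s)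
    (hW : W.Nonempty)
    (hC : ∀ i ∈ W, ∀ j ∈ W, ∀ e, ‖e‖ ≤ 1 → ⟪e, v s i - v s j⟫ = sdiam ↑W (v s) →
      ⟪e, v' i - v' j⟫ ≤ C) {C' : ℝ} (hCC' : C < C') :
    ∀ᶠ z in 𝓝[>] s, slope (fun u => sdiam ↑W (v u)) s z < C' := by
  choose e he hes hder using fun p : Fin n × Fin n =>
    exists_hasDerivWithinAt_norm ((hv p.1).sub (hv p.2))
  simp only [sdiam_eq_finset_sup' hW]
  refine eventually_slope_finset_sup'_lt _ (fun p _ => hder p) (fun p hp hmax => ?_) hCC'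
  obtain ⟨hi, hj⟩ := Finset.mem_product.1 hp
  exact hC _ hi _ hj _ (he p) ((hes p).trans (hmax.trans (sdiam_eq_finset_sup' hW _).symm))

theorem diniUpper_sdiam_le (hv : ∀ i, HasDerivAt (fun u => v u i) (v' i) s) (hW : W.Nonempty)
    (hC : ∀ i ∈ W, ∀ j ∈ W, ∀ e, ‖e‖ ≤ 1 → ⟪e, v s i - v s j⟫ = sdiam ↑W (v s) →
      ⟪e, v' i - v' j⟫ ≤ C) :
    diniUpper (fun u => sdiam ↑W (v u)) s ≤ C := by
  choose e he hes hder using fun p : Fin n × Fin n =>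
    exists_hasDerivWithinAt_norm ((hv p.1).sub (hv p.2))
  simp only [sdiam_eq_finset_sup' hW]
  refine diniUpper_finset_sup'_le _ (fun p _ => hder p) (fun p hp hmax => ?_)
  obtain ⟨hi, hj⟩ := Finset.mem_product.1 hp
  exact hC _ hi _ hj _ (he p) ((hes p).trans (hmax.trans (sdiam_eq_finset_sup' hW _).symm))

end Diameter

section Consensus

variable {E : Type*} [NormedAddCommGroup E] [InnerProductSpace ℝ E] {n d : ℕ}

def consensusField (a : Fin n → Fin n → ℝ) (w : Fin n → E) (i : Fin n) : E :=
  ∑ j, a i j • (w j - w i)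

theorem inner_consensusField_sub (e : E) (a : Fin n → Fin n → ℝ) (w : Fin n → E) (i j : Fin n) :
    ⟪e, consensusField a w i - consensusField a w j⟫
      = ∑ l, a i l * (⟪e, w l⟫ - ⟪e, w i⟫) + ∑ l, a j l * (⟪e, w j⟫ - ⟪e, w l⟫) := by
  simp only [consensusField, inner_sub_right, inner_sum, real_inner_smul_right, mul_sub,
    Finset.sum_sub_distrib]
  ring

theorem sum_mul_le_mul_of_nonneg {ι : Type*} {T : Finset ι} {b y : ι → ℝ} {M β : ℝ}
    (hb : ∀ l ∈ T, 0 ≤ b l) (hy : ∀ l ∈ T, y l ≤ M) (hM : 0 ≤ M) (hβ : ∑ l ∈ T, b l ≤ β) :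
    ∑ l ∈ T, b l * y l ≤ β * M :=
  calc ∑ l ∈ T, b l * y l ≤ ∑ l ∈ T, b l * M :=
        Finset.sum_le_sum fun l hl => mul_le_mul_of_nonneg_left (hy l hl) (hb l hl)
    _ = (∑ l ∈ T, b l) * M := (Finset.sum_mul _ _ _).symm
    _ ≤ β * M := mul_le_mul_of_nonneg_right hβ hM

theorem sum_mul_le_mul_of_nonpos {ι : Type*} {T : Finset ι} {b y : ι → ℝ} {M α : ℝ}
    (hb : ∀ l ∈ T, 0 ≤ b l) (hy : ∀ l ∈ T, y l ≤ M) (hM : M ≤ 0) (hα : α ≤ ∑ l ∈ T, b l) :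
    ∑ l ∈ T, b l * y l ≤ α * M :=
  calc ∑ l ∈ T, b l * y l ≤ ∑ l ∈ T, b l * M :=
        Finset.sum_le_sum fun l hl => mul_le_mul_of_nonneg_left (hy l hl) (hb l hl)
    _ = (∑ l ∈ T, b l) * M := (Finset.sum_mul _ _ _).symm
    _ ≤ α * M := mul_le_mul_of_nonpos_right hα hM

/-- `x i` and `x j` bound `x` on `T` from above and below, so the agents of `T` can only pull `i`
and `j` together. -/
theorem sum_mul_sub_add_sum_mul_sub_le {ι : Type*} [Fintype ι] [DecidableEq ι] {a : ι → ι → ℝ}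
    (ha : ∀ i j, 0 ≤ a i j) (x : ι → ℝ) {T : Finset ι} (hT : T.Nonempty) {i j : ι}
    {δT δN α β : ℝ} (hTi : ∀ l ∈ T, x l ≤ x i) (hTj : ∀ l ∈ T, x j ≤ x l)
    (hδT : ∀ l ∈ T, ∀ l' ∈ T, x l - x l' ≤ δT) (hδN : ∀ l l', x l - x l' ≤ δN) (hα : 0 ≤ α)
    (hαi : α ≤ ∑ l ∈ T, a i l) (hαj : α ≤ ∑ l ∈ T, a j l)
    (hβi : ∑ l ∈ Tᶜ, a i l ≤ β) (hβj : ∑ l ∈ Tᶜ, a j l ≤ β) :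
    ∑ l, a i l * (x l - x i) + ∑ l, a j l * (x j - x l) ≤
      α * (δT - (x i - x j)) + β * (δN - (x i - x j)) := by
  obtain ⟨p, hp, hpmax⟩ := T.exists_max_image x hT
  obtain ⟨q, hq, hqmin⟩ := T.exists_min_image x hT
  obtain ⟨P, -, hPmax⟩ := Finset.univ.exists_max_image x ⟨i, Finset.mem_univ i⟩
  obtain ⟨Q, -, hQmin⟩ := Finset.univ.exists_min_image x ⟨i, Finset.mem_univ i⟩
  have hβ : 0 ≤ β := (Finset.sum_nonneg fun l _ => ha i l).trans hβi
  have hin_i : ∑ l ∈ T, a i l * (x l - x i) ≤ α * (x p - x i) :=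
    sum_mul_le_mul_of_nonpos (fun l _ => ha i l) (fun l hl => by linarith [hpmax l hl])
      (by linarith [hTi p hp]) hαi
  have hin_j : ∑ l ∈ T, a j l * (x j - x l) ≤ α * (x j - x q) :=
    sum_mul_le_mul_of_nonpos (fun l _ => ha j l) (fun l hl => by linarith [hqmin l hl])
      (by linarith [hTj q hq]) hαj
  have hout_i : ∑ l ∈ Tᶜ, a i l * (x l - x i) ≤ β * (x P - x i) :=
    sum_mul_le_mul_of_nonneg (fun l _ => ha i l)
      (fun l _ => by linarith [hPmax l (Finset.mem_univ l)])
      (by linarith [hPmax i (Finset.mem_univ i)]) hβi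
  have hout_j : ∑ l ∈ Tᶜ, a j l * (x j - x l) ≤ β * (x j - x Q) :=
    sum_mul_le_mul_of_nonneg (fun l _ => ha j l)
      (fun l _ => by linarith [hQmin l (Finset.mem_univ l)])
      (by linarith [hQmin j (Finset.mem_univ j)]) hβj
  have hpq := mul_le_mul_of_nonneg_left (hδT p hp q hq) hα
  have hPQ := mul_le_mul_of_nonneg_left (hδN P Q) hβ
  rw [← Finset.sum_add_sum_compl T, ← Finset.sum_add_sum_compl T]
  linarith

theorem inner_consensusField_sub_le {a : Fin n → Fin n → ℝ} (ha : ∀ i j, 0 ≤ a i j)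
    (w : Fin n → EuclideanSpace ℝ (Fin d)) {W T : Finset (Fin n)} (hT : T.Nonempty)
    (hTW : T ⊆ W) {i j : Fin n} (hi : i ∈ W) (hj : j ∈ W) {e : EuclideanSpace ℝ (Fin d)}
    (he : ‖e‖ ≤ 1) (hij : ⟪e, w i - w j⟫ = sdiam ↑W w) {α β : ℝ} (hα : 0 ≤ α)
    (hαi : α ≤ ∑ l ∈ T, a i l) (hαj : α ≤ ∑ l ∈ T, a j l)
    (hβi : ∑ l ∈ Tᶜ, a i l ≤ β) (hβj : ∑ l ∈ Tᶜ, a j l ≤ β) :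
    ⟪e, consensusField a w i - consensusField a w j⟫ ≤
      α * (sdiam ↑T w - sdiam ↑W w) +
        β * (sdiam ↑(Finset.univ : Finset (Fin n)) w - sdiam ↑W w) := by
  have hij' : ⟪e, w i⟫ - ⟪e, w j⟫ = sdiam ↑W w := by rw [← hij, inner_sub_right]
  rw [inner_consensusField_sub, ← hij']
  exact sum_mul_sub_add_sum_mul_sub_le ha (fun l => ⟪e, w l⟫) hT
    (fun l hl => by linarith [inner_sub_le_sdiam (hTW hl) hj he w])
    (fun l hl => by linarith [inner_sub_le_sdiam hi (hTW hl) he w])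
    (fun l hl l' hl' => inner_sub_le_sdiam hl hl' he w)
    (fun l l' => inner_sub_le_sdiam (Finset.mem_univ l) (Finset.mem_univ l') he w)
    hα hαi hαj hβi hβj

variable {v : ℝ → Fin n → EuclideanSpace ℝ (Fin d)}

theorem diniUpper_sdiam_consensus_le {a : Fin n → Fin n → ℝ} (ha : ∀ i j, 0 ≤ a i j) {s : ℝ}
    (hv : ∀ i, HasDerivAt (fun u => v u i) (consensusField a (v s) i) s)
    {W T : Finset (Fin n)} (hT : T.Nonempty) (hTW : T ⊆ W) {α β : ℝ} (hα : 0 ≤ α)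
    (hαT : ∀ i ∈ W, α ≤ ∑ l ∈ T, a i l) (hβT : ∀ i ∈ W, ∑ l ∈ Tᶜ, a i l ≤ β) :
    diniUpper (fun u => sdiam ↑W (v u)) s ≤
      α * (sdiam ↑T (v s) - sdiam ↑W (v s)) +
        β * (sdiam ↑(Finset.univ : Finset (Fin n)) (v s) - sdiam ↑W (v s)) :=
  diniUpper_sdiam_le hv (hT.mono hTW) fun i hi j hj _ he hij =>
    inner_consensusField_sub_le ha (v s) hT hTW hi hj he hij hα (hαT i hi) (hαT j hj)
      (hβT i hi) (hβT j hj)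

theorem sdiam_univ_le_of_consensus [Nonempty (Fin n)] {a : ℝ → Fin n → Fin n → ℝ}
    (ha : ∀ t i j, 0 ≤ a t i j) {t₀ t₁ : ℝ} (ht : t₀ ≤ t₁)
    (hv : ∀ i, ∀ u ∈ Icc t₀ t₁, HasDerivAt (fun w => v w i) (consensusField (a u) (v u) i) u) :
    sdiam ↑(Finset.univ : Finset (Fin n)) (v t₁) ≤
      sdiam ↑(Finset.univ : Finset (Fin n)) (v t₀) := by
  have hcont :
      ContinuousOn (fun u => sdiam ↑(Finset.univ : Finset (Fin n)) (v u)) (Icc t₀ t₁) := by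
    intro u hu
    simp only [sdiam_eq_finset_sup' Finset.univ_nonempty]
    exact (ContinuousAt.finset_sup'_apply _ fun p _ =>
      ((hv p.1 u hu).continuousAt.sub (hv p.2 u hu).continuousAt).norm).continuousWithinAt
  have hnonpos : ∀ u ∈ Icc t₀ t₁, ∀ i j e, ‖e‖ ≤ 1 →
      ⟪e, v u i - v u j⟫ = sdiam ↑(Finset.univ : Finset (Fin n)) (v u) →
      ⟪e, consensusField (a u) (v u) i - consensusField (a u) (v u) j⟫ ≤ 0 := by
    intro u _ i j e he hij
    simpa using inner_consensusField_sub_le (ha u) (v u) Finset.univ_nonempty subset_rfl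
      (Finset.mem_univ i) (Finset.mem_univ j) he hij (α := 0) (β := 0) le_rfl
      (Finset.sum_nonneg fun l _ => ha u i l) (Finset.sum_nonneg fun l _ => ha u j l)
      (by simp) (by simp)
  refine image_le_of_liminf_slope_right_le_deriv_boundary hcont le_rfl continuousOn_const
    (fun _ _ => hasDerivWithinAt_const _ _ _) (fun u hu r hr => ?_) (right_mem_Icc.2 ht)
  have hu := Ico_subset_Icc_self hu
  exact (eventually_slope_sdiam_lt (fun i => hv i u hu) Finset.univ_nonempty
    (fun i _ j _ e he hij => hnonpos u hu i j e he hij) hr).frequently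

end Consensus

theorem nonneg_of_eq_zero_or_eq_one {x : ℝ} (h : x = 0 ∨ x = 1) : 0 ≤ x := by
  rcases h with rfl | rfl <;> norm_num

section Hierarchy

variable {n : ℕ} (ta : Fin n → Fin n → ℝ) (r : Fin n)

theorem hierU_subset_succ (k : ℕ) : hierU ta r k ⊆ hierU ta r (k + 1) :=
  Finset.subset_union_left

theorem root_mem_hierU (k : ℕ) : r ∈ hierU ta r k := by
  induction k with
  | zero => simp [hierU, hierSU]
  | succ k ih => exact hierU_subset_succ ta r k ih

theorem hierAlpha_nonneg {ta : Fin n → Fin n → ℝ} (hta : ∀ i j, 0 ≤ ta i j) (k : ℕ) :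
    0 ≤ hierAlpha ta r k :=
  Real.sInf_nonneg <| by
    rintro x ⟨i, _, rfl⟩
    exact Finset.sum_nonneg fun j _ => hta i j

end Hierarchy

theorem stmt8_general {n d : ℕ} (m D : ℕ) (hm : 1 ≤ m)
    (ta : Fin n → Fin n → ℝ) (hta : ∀ i j, ta i j = 0 ∨ ta i j = 1)
    (r : Fin n)
    (a : ℝ → Fin n → Fin n → ℝ)
    (ha01 : ∀ t i j, a t i j = 0 ∨ a t i j = 1)
    (hreg : ∀ t i, ∑ j, a t i j = (m : ℝ))
    (v : ℝ → Fin n → EuclideanSpace ℝ (Fin d))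
    (t0 s : ℝ) (hts : t0 < s)
    (htraj : ∀ i : Fin n, ∀ u ∈ Set.Icc t0 s,
      HasDerivAt (fun w => v w i) (∑ j, a u i j • (v u j - v u i)) u)
    (hhyp : ∀ u ∈ Set.Icc t0 s, HypOne m D ta r (a u)) :
    diniUpper (fun u => sdiam ↑(hierU ta r 1) (v u)) s ≤
      -sdiam ↑(hierU ta r 1) (v s) +
        (m : ℝ) * (sdiam Set.univ (v t0) - sdiam ↑(hierU ta r 1) (v s)) ∧
    ∀ k : ℕ, 1 ≤ k → k ≤ D - 1 →
      diniUpper (fun u => sdiam ↑(hierU ta r (k + 1)) (v u)) s ≤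
        hierAlpha ta r k *
            (sdiam ↑(hierU ta r k) (v s) - sdiam ↑(hierU ta r (k + 1)) (v s)) +
          ((m : ℝ) - hierAlpha ta r k) *
            (sdiam Set.univ (v t0) - sdiam ↑(hierU ta r (k + 1)) (v s)) := by
  have hs : s ∈ Icc t0 s := right_mem_Icc.2 hts.le
  have ha : ∀ t i j, 0 ≤ a t i j := fun t i j => nonneg_of_eq_zero_or_eq_one (ha01 t i j)
  have hroot : ∀ k, r ∈ hierU ta r k := root_mem_hierU ta r
  have hv : ∀ i, HasDerivAt (fun u => v u i) (consensusField (a s) (v s) i) s :=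
    fun i => htraj i s hs
  have : Nonempty (Fin n) := ⟨r⟩
  have hN : sdiam ↑(Finset.univ : Finset (Fin n)) (v s) ≤
      sdiam ↑(Finset.univ : Finset (Fin n)) (v t0) :=
    sdiam_univ_le_of_consensus ha hts.le htraj
  rw [← Finset.coe_univ]
  refine ⟨?_, fun k hk1 hk2 => ?_⟩
  · have hroot_in : ∀ i ∈ hierU ta r 1, ∑ l ∈ ({r} : Finset (Fin n)), a s i l = 1 :=
      fun i hi => by rw [Finset.sum_singleton, (hhyp s hs).1 i hi]
    have hroot_out : ∀ i ∈ hierU ta r 1, ∑ l ∈ ({r} : Finset (Fin n))ᶜ, a s i l ≤ m - 1 :=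
      fun i hi => by linarith [Finset.sum_add_sum_compl {r} (a s i), hroot_in i hi, hreg s i]
    have h1 := diniUpper_sdiam_consensus_le (ha s) hv (Finset.singleton_nonempty r)
      (Finset.singleton_subset_iff.2 (hroot 1)) zero_le_one (fun i hi => (hroot_in i hi).ge)
      hroot_out
    rw [sdiam_singleton] at h1
    have hW := sdiam_mono ⟨r, hroot 1⟩ (Finset.subset_univ (hierU ta r 1)) (v s)
    have hm' : (1 : ℝ) ≤ m := by exact_mod_cast hm
    linarith [mul_le_mul_of_nonneg_left hN (sub_nonneg.2 hm')]
  · have hk := fun i hi => (hhyp s hs).2 k hk1 hk2 i hi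
    have hβ : 0 ≤ (m : ℝ) - hierAlpha ta r k :=
      (Finset.sum_nonneg fun l _ => ha s r l).trans (hk r (hroot (k + 1))).2
    refine (diniUpper_sdiam_consensus_le (ha s) hv ⟨r, hroot k⟩ (hierU_subset_succ ta r k)
      (hierAlpha_nonneg r (fun i j => nonneg_of_eq_zero_or_eq_one (hta i j)) k)
      (fun i hi => (hk i hi).1) (fun i hi => (hk i hi).2)).trans ?_
    gcongr

/-- Lemma 10: under preservation of the hierarchical structure (Hypothesis 1) on
`[t₀, s]`, the Dini derivatives of the diameters satisfy
`D⁺Δ_{U_1}(s) ≤ -Δ_{U_1}(s) + m (Δ_N(t₀) - Δ_{U_1}(s))` and, for `k ∈ {1, …, D-1}`,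
`D⁺Δ_{U_{k+1}}(s) ≤ α_k (Δ_{U_k}(s) - Δ_{U_{k+1}}(s))
                      + (m - α_k)(Δ_N(t₀) - Δ_{U_{k+1}}(s))`. -/
theorem stmt8 {n d : ℕ} (m D : ℕ) (hm : 1 ≤ m)
    (ta : Fin n → Fin n → ℝ) (hta : ∀ i j, ta i j = 0 ∨ ta i j = 1)
    (r : Fin n)
    (hspan : hierU ta r D = Finset.univ)
    (hdepth : ∀ k < D, hierU ta r k ≠ Finset.univ)
    (a : ℝ → Fin n → Fin n → ℝ)
    (ha01 : ∀ t i j, a t i j = 0 ∨ a t i j = 1)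
    (hreg : ∀ t i, ∑ j, a t i j = (m : ℝ))
    (v : ℝ → Fin n → EuclideanSpace ℝ (Fin d))
    (t0 s : ℝ) (ht0 : 0 ≤ t0) (hts : t0 < s)
    (htraj : ∀ i : Fin n, ∀ u ∈ Set.Icc t0 s,
      HasDerivAt (fun w => v w i) (∑ j, a u i j • (v u j - v u i)) u)
    (hhyp : ∀ u ∈ Set.Icc t0 s, HypOne m D ta r (a u)) :
    diniUpper (fun u => sdiam ↑(hierU ta r 1) (v u)) s ≤
      -sdiam ↑(hierU ta r 1) (v s) +
        (m : ℝ) * (sdiam Set.univ (v t0) - sdiam ↑(hierU ta r 1) (v s)) ∧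
    ∀ k : ℕ, 1 ≤ k → k ≤ D - 1 →
      diniUpper (fun u => sdiam ↑(hierU ta r (k + 1)) (v u)) s ≤
        hierAlpha ta r k *
            (sdiam ↑(hierU ta r k) (v s) - sdiam ↑(hierU ta r (k + 1)) (v s)) +
          ((m : ℝ) - hierAlpha ta r k) *
            (sdiam Set.univ (v t0) - sdiam ↑(hierU ta r (k + 1)) (v s)) :=
  stmt8_general m D hm ta hta r a ha01 hreg v t0 s hts htraj hhyp
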